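/- arXiv:2509.21064 — 2 statements merged into one kernel-verified Lean document; each statement's English description precedes it below -/
import Mathlib

section
/- Let n be a positive integer, F : {0,1}^n → ℝ, and let f be the multilinear extension of F. Let g : [0,1] → ℝ satisfy g(0) = g(1) = 0 and g(t) < 0 for all t ∈ (0,1), and define the Lagrangian L(x,y) = f(x) + Σ_{i=1}^n y_i g(x_i). Then the strong max-min property holds in the extended reals: inf_{x ∈ [0,1]^n} sup_{y ∈ ℝ^n} L(x,y) = sup_{y ∈ ℝ^n} inf_{x ∈ [0,1]^n} L(x,y), and both sides equal min_{ξ ∈ {0,1}^n} F(ξ). -/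
/-- The multilinear extension of a function `F` on the binary hypercube `{0,1}^n`
(encoded as `Fin n → Fin 2`). -/
noncomputable def multilinearExt (n : ℕ) (F : (Fin n → Fin 2) → ℝ)
    (x : Fin n → ℝ) : ℝ :=
  ∑ ξ : Fin n → Fin 2,
    (∏ i : Fin n, (x i) ^ (ξ i : ℕ) * (1 - x i) ^ (1 - (ξ i : ℕ))) * F ξ

lemma weight_sum (n : ℕ) (x : Fin n → ℝ) :
    ∑ ξ : Fin n → Fin 2, ∏ i, (x i) ^ (ξ i : ℕ) * (1 - x i) ^ (1 - (ξ i : ℕ)) = 1 := by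
  have h := Finset.prod_univ_sum (fun _ : Fin n => (Finset.univ : Finset (Fin 2)))
    (fun i j => (x i) ^ (j : ℕ) * (1 - x i) ^ (1 - (j : ℕ)))
  rw [Fintype.piFinset_univ] at h
  rw [← h]
  have h2 : ∀ i : Fin n, ∑ j : Fin 2, (x i) ^ (j : ℕ) * (1 - x i) ^ (1 - (j : ℕ)) = 1 := by
    intro i
    rw [Fin.sum_univ_two]
    norm_num
  simp [h2]

lemma ext_ge (n : ℕ) (F : (Fin n → Fin 2) → ℝ) (x : Fin n → ℝ)
    (hx : ∀ i, x i ∈ Set.Icc (0 : ℝ) 1) :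
    (⨅ ξ : Fin n → Fin 2, F ξ) ≤ multilinearExt n F x := by
  have hw : ∀ ξ : Fin n → Fin 2, 0 ≤ ∏ i, (x i) ^ (ξ i : ℕ) * (1 - x i) ^ (1 - (ξ i : ℕ)) :=
    fun ξ => Finset.prod_nonneg fun i _ =>
      mul_nonneg (pow_nonneg (hx i).1 _) (pow_nonneg (by linarith [(hx i).2]) _)
  calc (⨅ ξ : Fin n → Fin 2, F ξ)
      = ∑ ξ : Fin n → Fin 2, (∏ i, (x i) ^ (ξ i : ℕ) * (1 - x i) ^ (1 - (ξ i : ℕ)))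
          * (⨅ ξ : Fin n → Fin 2, F ξ) := by
        rw [← Finset.sum_mul, weight_sum, one_mul]
    _ ≤ multilinearExt n F x := Finset.sum_le_sum fun ξ _ =>
        mul_le_mul_of_nonneg_left (ciInf_le (Finite.bddBelow_range F) ξ) (hw ξ)

lemma multilinearExt_vertex (n : ℕ) (F : (Fin n → Fin 2) → ℝ) (ξ₀ : Fin n → Fin 2) :
    multilinearExt n F (fun i => ((ξ₀ i : ℕ) : ℝ)) = F ξ₀ := by
  unfold multilinearExt
  rw [Finset.sum_eq_single ξ₀]
  · have h1 : (∏ i : Fin n, (((ξ₀ i : ℕ) : ℝ)) ^ (ξ₀ i : ℕ)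
        * (1 - ((ξ₀ i : ℕ) : ℝ)) ^ (1 - (ξ₀ i : ℕ))) = 1 := by
      refine Finset.prod_eq_one fun i _ => ?_
      have : (ξ₀ i : ℕ) = 0 ∨ (ξ₀ i : ℕ) = 1 := by omega
      rcases this with h | h <;> simp [h]
    rw [h1, one_mul]
  · intro ξ' _ hne
    obtain ⟨i, hi⟩ := Function.ne_iff.mp hne
    apply mul_eq_zero_of_left
    apply Finset.prod_eq_zero (Finset.mem_univ i)
    have hne' : (ξ' i : ℕ) ≠ (ξ₀ i : ℕ) := fun h => hi (Fin.ext h)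
    have h0 : (ξ₀ i : ℕ) < 2 := (ξ₀ i).isLt
    have h1 : (ξ' i : ℕ) < 2 := (ξ' i).isLt
    have : ((ξ₀ i : ℕ) = 0 ∧ (ξ' i : ℕ) = 1) ∨ ((ξ₀ i : ℕ) = 1 ∧ (ξ' i : ℕ) = 0) := by omega
    rcases this with ⟨ha, hb⟩ | ⟨ha, hb⟩ <;> simp [ha, hb]
  · simp

/-- Strong duality: with `f` the multilinear extension of `F`, `g` vanishing at `0, 1` and
negative on `(0,1)`, and `L(x,y) = f(x) + ∑ i, y_i g(x_i)`, the strong max-min property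
holds in the extended reals, and both sides equal `min_{ξ ∈ {0,1}^n} F(ξ)`. -/
theorem strong_duality
    (n : ℕ) (hn : 0 < n) (F : (Fin n → Fin 2) → ℝ)
    (g : ℝ → ℝ) (hg0 : g 0 = 0) (hg1 : g 1 = 0)
    (hgneg : ∀ t ∈ Set.Ioo (0 : ℝ) 1, g t < 0) :
    (⨅ x ∈ {x : Fin n → ℝ | ∀ i, x i ∈ Set.Icc (0 : ℝ) 1},
        ⨆ y : Fin n → ℝ,
          ((multilinearExt n F x + ∑ i : Fin n, y i * g (x i) : ℝ) : EReal))
      = (⨆ y : Fin n → ℝ,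
          ⨅ x ∈ {x : Fin n → ℝ | ∀ i, x i ∈ Set.Icc (0 : ℝ) 1},
            ((multilinearExt n F x + ∑ i : Fin n, y i * g (x i) : ℝ) : EReal)) ∧
    (⨅ x ∈ {x : Fin n → ℝ | ∀ i, x i ∈ Set.Icc (0 : ℝ) 1},
        ⨆ y : Fin n → ℝ,
          ((multilinearExt n F x + ∑ i : Fin n, y i * g (x i) : ℝ) : EReal))
      = (((⨅ ξ : Fin n → Fin 2, F ξ) : ℝ) : EReal) := by
  classical
  set m : ℝ := ⨅ ξ : Fin n → Fin 2, F ξ with hm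
  obtain ⟨ξ₀, hξ₀⟩ := Finite.exists_min F
  have hmξ₀ : m = F ξ₀ := le_antisymm (ciInf_le (Finite.bddBelow_range F) ξ₀) (le_ciInf hξ₀)
  set x₀ : Fin n → ℝ := fun i => ((ξ₀ i : ℕ) : ℝ) with hx₀
  have hx₀S : x₀ ∈ {x : Fin n → ℝ | ∀ i, x i ∈ Set.Icc (0 : ℝ) 1} := by
    intro i
    have : (ξ₀ i : ℕ) < 2 := (ξ₀ i).isLt
    constructor <;> simp [hx₀] <;> omega
  have hx₀g : ∀ i, g (x₀ i) = 0 := by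
    intro i
    have : (ξ₀ i : ℕ) = 0 ∨ (ξ₀ i : ℕ) = 1 := by omega
    rcases this with h | h <;> simp [hx₀, h, hg0, hg1]
  have hfx₀ : multilinearExt n F x₀ = F ξ₀ := multilinearExt_vertex n F ξ₀
  have hsup : ∀ y : Fin n → ℝ,
      multilinearExt n F x₀ + ∑ i : Fin n, y i * g (x₀ i) = m := by
    intro y
    simp [hx₀g, hfx₀, hmξ₀]
  have hLHS : (⨅ x ∈ {x : Fin n → ℝ | ∀ i, x i ∈ Set.Icc (0 : ℝ) 1},
      ⨆ y : Fin n → ℝ,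
        ((multilinearExt n F x + ∑ i : Fin n, y i * g (x i) : ℝ) : EReal)) = (m : EReal) := by
    apply le_antisymm
    · refine le_trans (iInf₂_le x₀ hx₀S) (iSup_le fun y => ?_)
      rw [hsup y]
    · refine le_iInf₂ fun x hx => ?_
      refine le_trans ?_ (le_iSup _ (0 : Fin n → ℝ))
      simp only [Pi.zero_apply, zero_mul, Finset.sum_const_zero, add_zero]
      exact_mod_cast ext_ge n F x hx
  have hRHS : (⨆ y : Fin n → ℝ,
      ⨅ x ∈ {x : Fin n → ℝ | ∀ i, x i ∈ Set.Icc (0 : ℝ) 1},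
        ((multilinearExt n F x + ∑ i : Fin n, y i * g (x i) : ℝ) : EReal)) = (m : EReal) := by
    apply le_antisymm
    · refine iSup_le fun y => le_trans (iInf₂_le x₀ hx₀S) ?_
      rw [hsup y]
    · refine le_trans ?_ (le_iSup _ (0 : Fin n → ℝ))
      refine le_iInf₂ fun x hx => ?_
      simp only [Pi.zero_apply, zero_mul, Finset.sum_const_zero, add_zero]
      exact_mod_cast ext_ge n F x hx
  exact ⟨hLHS.trans hRHS.symm, hLHS⟩
end

section
/- Let n be a positive integer, β > 0, and let (xᵗ)_{t≥0} be a sequence in [0,1]^n, (yᵗ)_{t≥0} a sequence in ℝ^n, and g : [0,1] → ℝ a function with g(s) ≤ 0 for all s ∈ [0,1], such that yᵗ⁺¹_i = yᵗ_i + β·g(xᵗ_i) for all t ≥ 0 and i ∈ {1,…,n}. Suppose y* ∈ ℝ^n satisfies yᵗ_i ≥ y*_i for all t ≥ 0 and all i. Then for every integer T ≥ 1: (1/T)·Σ_{t=0}^{T-1} Σ_{i=1}^n (-g(xᵗ_i)) ≤ ‖y⁰ - y*‖₁/(β·T); consequently, for every ε > 0, if T ≥ ‖y⁰ - y*‖₁/(β·ε)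 then there exists t with 0 ≤ t < T such that xᵗ is an ε-binary point, i.e. -Σ_{i=1}^n g(xᵗ_i) ≤ ε. -/
/-- Iteration complexity of PDBO toward `ε`-binary points.  With dual updates
`yᵗ⁺¹_i = yᵗ_i + β g(xᵗ_i)`, `g ≤ 0` on `[0,1]`, and `yᵗ ≥ y*` componentwise, the average
integrality violation after `T` steps is at most `‖y⁰ - y*‖₁/(βT)`; consequently, for
every `ε > 0`, if `T ≥ ‖y⁰ - y*‖₁/(βε)` then some iterate `xᵗ` with `t < T` is an
`ε`-binary point, i.e. `-∑ i, g(xᵗ_i) ≤ ε`. -/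
theorem pdbo_epsilon_binary_complexity
    (n : ℕ) (hn : 0 < n) (β : ℝ) (hβ : 0 < β)
    (g : ℝ → ℝ) (hg : ∀ s ∈ Set.Icc (0 : ℝ) 1, g s ≤ 0)
    (x : ℕ → Fin n → ℝ) (hx : ∀ t i, x t i ∈ Set.Icc (0 : ℝ) 1)
    (y : ℕ → Fin n → ℝ)
    (hupd : ∀ t : ℕ, ∀ i : Fin n, y (t + 1) i = y t i + β * g (x t i))
    (ystar : Fin n → ℝ) (hstar : ∀ t : ℕ, ∀ i : Fin n, ystar i ≤ y t i) :
    (∀ T : ℕ, 1 ≤ T →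
      (1 / (T : ℝ)) * ∑ t ∈ Finset.range T, ∑ i : Fin n, (-(g (x t i)))
        ≤ (∑ i : Fin n, |y 0 i - ystar i|) / (β * T)) ∧
    (∀ ε : ℝ, 0 < ε → ∀ T : ℕ, 1 ≤ T →
      (∑ i : Fin n, |y 0 i - ystar i|) / (β * ε) ≤ (T : ℝ) →
      ∃ t : ℕ, t < T ∧ -(∑ i : Fin n, g (x t i)) ≤ ε) := by
  -- telescoping
  have htel : ∀ T i, y T i = y 0 i + β * ∑ t ∈ Finset.range T, g (x t i) := by
    intro T i
    induction T with
    | zero => simp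
    | succ T ih =>
      rw [hupd T i, ih, Finset.sum_range_succ]
      ring
  have key : ∀ T : ℕ,
      ∑ t ∈ Finset.range T, ∑ i : Fin n, (-(g (x t i)))
        ≤ (∑ i : Fin n, |y 0 i - ystar i|) / β := by
    intro T
    rw [Finset.sum_comm]
    rw [div_eq_inv_mul, Finset.mul_sum]
    apply Finset.sum_le_sum
    intro i _
    have h := hstar T i
    rw [htel T i] at h
    have h2 : ∑ t ∈ Finset.range T, (-(g (x t i)))
        = β⁻¹ * (y 0 i - y T i) := by
      rw [htel T i, Finset.sum_neg_distrib]
      field_simp; ring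
    rw [h2]
    apply mul_le_mul_of_nonneg_left _ (by positivity)
    calc y 0 i - y T i ≤ y 0 i - ystar i := by linarith [hstar T i]
      _ ≤ |y 0 i - ystar i| := le_abs_self _
  have hS : 0 ≤ ∑ i : Fin n, |y 0 i - ystar i| :=
    Finset.sum_nonneg fun i _ => abs_nonneg _
  constructor
  · intro T hT
    have hTpos : (0:ℝ) < T := by exact_mod_cast hT
    have h1 : ((∑ i : Fin n, |y 0 i - ystar i|) / β) / (T:ℝ)
        = (∑ i : Fin n, |y 0 i - ystar i|) / (β * T) := div_div _ _ _
    rw [← h1, one_div, inv_mul_eq_div]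
    exact div_le_div_of_nonneg_right (key T) hTpos.le
  · intro ε hε T hT hTbig
    by_contra hcon
    push_neg at hcon
    have hsum : ε * T < ∑ t ∈ Finset.range T, ∑ i : Fin n, (-(g (x t i))) := by
      have : ∑ t ∈ Finset.range T, ε < ∑ t ∈ Finset.range T, ∑ i : Fin n, (-(g (x t i))) := by
        apply Finset.sum_lt_sum_of_nonempty
        · exact Finset.nonempty_range_iff.mpr (by omega)
        · intro t ht
          have := hcon t (Finset.mem_range.mp ht)
          rw [Finset.sum_neg_distrib]
          linarith
      simpa [mul_comm] using this
    have h2 : (∑ i : Fin n, |y 0 i - ystar i|) / β ≤ ε * T := by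
      rw [div_le_iff₀ hβ] at *
      rw [div_le_iff₀ (by positivity)] at hTbig
      nlinarith
    linarith [key T]
end
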